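/- Let p, q, r be positive integers with p ≥ 4, q ≥ 2p, and 2p − 1 ≤ r ≤ p + q − 5, and let G = (C_p ∪ K_q) ∨ K_r be the join of the disjoint union of a cycle C_p and a complete graph K_q with K_r, a graph on n = p + q + r vertices. Then σ₂(G) = 2r + 4, ᾱ(G) = 2p + 1, and hence n − 1 ≥ σ₂(G) ≥ 2·ᾱ(G). -/

import Mathlib

/-!
Two cycle vertices at distance two are nonadjacent and have degree `r + 2`, while every
nonadjacent pair lies in `C_p ∪ K_q`, whose vertices all have degree at least `r + 2`; hence
`σ₂ = 2r + 4`. The vertex sets of `C_p` and `K_q` form a `(p, q)`-bipartite-hole, which contains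
an `(s, t)`-bipartite-hole whenever `s + t ≤ 2p + 1 ≤ q + 1`. Conversely, the vertices outside
`C_p` span a clique, so no bipartite-hole has more than `p` vertices on both sides; hence
`ᾱ = 2p + 1`. The two inequalities are then arithmetic in `p, q, r`.
-/

namespace SimpleGraph

variable {V : Type*}

/-- `G` has an `(s,t)`-bipartite-hole. -/
def HasBipHole (G : SimpleGraph V) (s t : ℕ) : Prop :=
  ∃ S T : Finset V, Disjoint S T ∧ S.card = s ∧ T.card = t ∧
    ∀ a ∈ S, ∀ b ∈ T, ¬ G.Adj a b

/-- The bipartite-hole-number `ᾱ(G)`. -/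
noncomputable def bipHoleNum (G : SimpleGraph V) : ℕ :=
  sInf {k | 0 < k ∧ ∃ s t : ℕ, 0 < s ∧ 0 < t ∧ s + t = k + 1 ∧ ¬ G.HasBipHole s t}

/-- `σ₂(G)`: the minimum of `d(x) + d(y)` over pairs of distinct nonadjacent vertices. -/
noncomputable def sigmaTwo (G : SimpleGraph V) : ℕ :=
  sInf {m | ∃ x y : V, x ≠ y ∧ ¬ G.Adj x y ∧
    m = (G.neighborSet x).ncard + (G.neighborSet y).ncard}

/-- The join `G ∨ H` of two graphs: their disjoint union together with all edges between
the two parts. -/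
def graphJoin {α β : Type*} (G : SimpleGraph α) (H : SimpleGraph β) :
    SimpleGraph (α ⊕ β) where
  Adj x y :=
    match x, y with
    | Sum.inl a, Sum.inl b => G.Adj a b
    | Sum.inr a, Sum.inr b => H.Adj a b
    | Sum.inl _, Sum.inr _ => True
    | Sum.inr _, Sum.inl _ => True
  symm := ⟨by rintro (a | a) (b | b) h <;> first | exact h.symm | trivial⟩
  loopless := ⟨by rintro (a | a) h <;> [exact G.irrefl h; exact H.irrefl h]⟩

end SimpleGraph

namespace SimpleGraph

variable {V W α β : Type*}

section BipHole

variable {G : SimpleGraph V} {s t : ℕ}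

theorem HasBipHole.symm (h : G.HasBipHole s t) : G.HasBipHole t s := by
  obtain ⟨S, T, hST, hS, hT, hno⟩ := h
  exact ⟨T, S, hST.symm, hT, hS, fun b hb a ha hba => hno a ha b hb hba.symm⟩

theorem HasBipHole.mono {s' t' : ℕ} (h : G.HasBipHole s t) (hs : s' ≤ s) (ht : t' ≤ t) :
    G.HasBipHole s' t' := by
  obtain ⟨S, T, hST, rfl, rfl, hno⟩ := h
  obtain ⟨S', hS', rfl⟩ := Finset.exists_subset_card_eq hs
  obtain ⟨T', hT', rfl⟩ := Finset.exists_subset_card_eq ht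
  exact ⟨S', T', hST.mono hS' hT', rfl, rfl, fun a ha b hb => hno a (hS' ha) b (hT' hb)⟩

theorem HasBipHole.map {G' : SimpleGraph W} (f : G ↪g G') (h : G.HasBipHole s t) :
    G'.HasBipHole s t := by
  obtain ⟨S, T, hST, rfl, rfl, hno⟩ := h
  refine ⟨S.map f.toEmbedding, T.map f.toEmbedding, (Finset.disjoint_map _).mpr hST,
    Finset.card_map _, Finset.card_map _, ?_⟩
  simp only [Finset.forall_mem_map]
  exact fun a ha b hb => f.map_adj_iff.not.mpr (hno a ha b hb)

theorem not_hasBipHole_of_isClique_compl (A : Finset V) (hA : G.IsClique (↑A)ᶜ)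
    (hs : A.card < s) (ht : A.card < t) : ¬ G.HasBipHole s t := by
  rintro ⟨S, T, hST, rfl, rfl, hno⟩
  obtain ⟨a, haS, haA⟩ := Finset.exists_mem_notMem_of_card_lt_card hs
  obtain ⟨b, hbT, hbA⟩ := Finset.exists_mem_notMem_of_card_lt_card ht
  exact hno a haS b hbT (hA haA hbA fun hab => Finset.disjoint_left.mp hST haS (hab ▸ hbT))

theorem bipHoleNum_eq {k : ℕ} (hs : 0 < s) (ht : 0 < t) (hst : s + t = k + 1)
    (hfree : ¬ G.HasBipHole s t)
    (hhole : ∀ s t, 0 < s → 0 < t → s + t ≤ k → G.HasBipHole s t) : G.bipHoleNum = k := by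
  have hk : k ∈ {k | 0 < k ∧ ∃ s t : ℕ, 0 < s ∧ 0 < t ∧ s + t = k + 1 ∧
      ¬ G.HasBipHole s t} := ⟨by omega, s, t, hs, ht, hst, hfree⟩
  refine le_antisymm (Nat.sInf_le hk) (le_csInf ⟨k, hk⟩ ?_)
  rintro j ⟨-, s', t', hs', ht', hst', hfree'⟩
  by_contra! hj
  exact hfree' (hhole s' t' hs' ht' (by omega))

end BipHole

section SigmaTwo

variable {G : SimpleGraph V}

theorem sigmaTwo_eq {m : ℕ} {x y : V} (hxy : x ≠ y) (hadj : ¬ G.Adj x y)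
    (hm : (G.neighborSet x).ncard + (G.neighborSet y).ncard = m)
    (hbound : ∀ u v, u ≠ v → ¬ G.Adj u v →
      m ≤ (G.neighborSet u).ncard + (G.neighborSet v).ncard) :
    G.sigmaTwo = m := by
  have hm' : m ∈ {m | ∃ x y : V, x ≠ y ∧ ¬ G.Adj x y ∧
      m = (G.neighborSet x).ncard + (G.neighborSet y).ncard} := ⟨x, y, hxy, hadj, hm.symm⟩
  refine le_antisymm (Nat.sInf_le hm') (le_csInf ⟨m, hm'⟩ ?_)
  rintro _ ⟨x, y, hxy, hadj, rfl⟩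
  exact hbound x y hxy hadj

end SigmaTwo

section Degree

variable {G : SimpleGraph V}

theorem ncard_neighborSet (G : SimpleGraph V) (v : V) [Fintype (G.neighborSet v)] :
    (G.neighborSet v).ncard = G.degree v := by
  rw [← card_neighborSet_eq_degree, ← Nat.card_eq_fintype_card, Nat.card_coe_set_eq]

theorem exists_ne_not_adj_of_degree_add_one_lt [Fintype V] [DecidableRel G.Adj] {v : V}
    (h : G.degree v + 1 < Fintype.card V) : ∃ w, v ≠ w ∧ ¬ G.Adj v w := by
  classical
  obtain ⟨w, -, hw⟩ := Finset.exists_mem_notMem_of_card_lt_card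
    (s := insert v (G.neighborFinset v)) (t := Finset.univ)
    ((Finset.card_insert_le _ _).trans_lt (by simpa using h))
  simp only [Finset.mem_insert, mem_neighborFinset, not_or] at hw
  exact ⟨w, Ne.symm hw.1, hw.2⟩

end Degree

section Join

variable {G : SimpleGraph α} {H : SimpleGraph β}

@[simp]
theorem graphJoin_adj_inl_inl {a b : α} : (graphJoin G H).Adj (.inl a) (.inl b) ↔ G.Adj a b :=
  Iff.rfl

@[simp]
theorem graphJoin_adj_inr_inr {a b : β} : (graphJoin G H).Adj (.inr a) (.inr b) ↔ H.Adj a b :=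
  Iff.rfl

@[simp]
theorem graphJoin_adj_inl_inr {a : α} {b : β} : (graphJoin G H).Adj (.inl a) (.inr b) :=
  trivial

@[simp]
theorem graphJoin_adj_inr_inl {a : β} {b : α} : (graphJoin G H).Adj (.inr a) (.inl b) :=
  trivial

theorem neighborSet_graphJoin_inl (a : α) :
    (graphJoin G H).neighborSet (.inl a) = Sum.inl '' G.neighborSet a ∪ Set.range Sum.inr := by
  ext (b | b) <;> simp

theorem ncard_neighborSet_graphJoin_inl [Finite β] {a : α} (ha : (G.neighborSet a).Finite) :
    ((graphJoin G H).neighborSet (.inl a)).ncard = (G.neighborSet a).ncard + Nat.card β := by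
  rw [neighborSet_graphJoin_inl, Set.ncard_union_eq ?_ (ha.image _) (Set.finite_range _),
    Set.ncard_image_of_injective _ Sum.inl_injective,
    Set.ncard_range_of_injective Sum.inr_injective]
  simp [Set.disjoint_left]

theorem graphJoin_top_adj_inr {z : β} {x : α ⊕ β} (h : .inr z ≠ x) :
    (graphJoin G (⊤ : SimpleGraph β)).Adj (.inr z) x := by
  rcases x with a | w
  · trivial
  · simpa using h

theorem HasBipHole.graphJoin_left {s t : ℕ} (h : G.HasBipHole s t) :
    (graphJoin G H).HasBipHole s t :=
  h.map ⟨Function.Embedding.inl, Iff.rfl⟩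

theorem hasBipHole_sum [Fintype α] [Fintype β] :
    (G ⊕g H).HasBipHole (Fintype.card α) (Fintype.card β) :=
  ⟨Finset.univ.map .inl, Finset.univ.map .inr, Finset.disjoint_map_inl_map_inr _ _, by simp,
    by simp, by simp⟩

end Join

def cycleCliqueJoin (p q r : ℕ) : SimpleGraph ((Fin p ⊕ Fin q) ⊕ Fin r) :=
  graphJoin (cycleGraph p ⊕g ⊤) ⊤

section CycleCliqueJoin

variable {p q r : ℕ}

theorem cycleGraph_degree (hp : 3 ≤ p) (v : Fin p) : (cycleGraph p).degree v = 2 := by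
  obtain ⟨n, rfl⟩ := Nat.exists_eq_add_of_le' hp
  exact cycleGraph_degree_three_le

theorem ncard_neighborSet_cycleCliqueJoin_inl (v : Fin p ⊕ Fin q) :
    ((cycleCliqueJoin p q r).neighborSet (.inl v)).ncard =
      ((cycleGraph p ⊕g ⊤).neighborSet v).ncard + r := by
  rw [cycleCliqueJoin, ncard_neighborSet_graphJoin_inl (Set.toFinite _), Nat.card_fin]

theorem ncard_neighborSet_cycleCliqueJoin_cycle (hp : 3 ≤ p) (v : Fin p) :
    ((cycleCliqueJoin p q r).neighborSet (.inl (.inl v))).ncard = 2 + r := by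
  rw [ncard_neighborSet_cycleCliqueJoin_inl, neighborSet_sum_inl,
    Set.ncard_image_of_injective _ Sum.inl_injective, ncard_neighborSet, cycleGraph_degree hp]

theorem ncard_neighborSet_cycleCliqueJoin_clique (v : Fin q) :
    ((cycleCliqueJoin p q r).neighborSet (.inl (.inr v))).ncard = (q - 1) + r := by
  rw [ncard_neighborSet_cycleCliqueJoin_inl, neighborSet_sum_inr,
    Set.ncard_image_of_injective _ Sum.inr_injective, ncard_neighborSet, complete_graph_degree,
    Fintype.card_fin]

theorem le_ncard_neighborSet_cycleCliqueJoin_of_not_adj (hp : 3 ≤ p) (hq : 3 ≤ q)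
    {x y : (Fin p ⊕ Fin q) ⊕ Fin r} (hxy : x ≠ y) (h : ¬ (cycleCliqueJoin p q r).Adj x y) :
    r + 2 ≤ ((cycleCliqueJoin p q r).neighborSet x).ncard := by
  rcases x with (v | v) | z
  · rw [ncard_neighborSet_cycleCliqueJoin_cycle hp]; omega
  · rw [ncard_neighborSet_cycleCliqueJoin_clique]; omega
  · exact absurd (graphJoin_top_adj_inr hxy) h

theorem cycleCliqueJoin_isClique_compl_cycle :
    (cycleCliqueJoin p q r).IsClique
      (↑(Finset.univ.map (Function.Embedding.inl.trans Function.Embedding.inl) :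
        Finset ((Fin p ⊕ Fin q) ⊕ Fin r)))ᶜ := by
  rintro ((v | u) | z) hx ((w | u') | z') hy hxy <;> simp_all [cycleCliqueJoin]

theorem sigmaTwo_cycleCliqueJoin (hp : 4 ≤ p) (hq : 3 ≤ q) :
    (cycleCliqueJoin p q r).sigmaTwo = 2 * r + 4 := by
  obtain ⟨w, hvw, hadj⟩ := (cycleGraph p).exists_ne_not_adj_of_degree_add_one_lt
    (v := ⟨0, by omega⟩) (by rw [cycleGraph_degree (by omega), Fintype.card_fin]; omega)
  refine sigmaTwo_eq (x := .inl (.inl _)) (y := .inl (.inl w)) (by simpa using hvw)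
    (by simpa [cycleCliqueJoin] using hadj) ?_ fun x y hxy h => ?_
  · rw [ncard_neighborSet_cycleCliqueJoin_cycle (by omega),
      ncard_neighborSet_cycleCliqueJoin_cycle (by omega)]
    ring
  · have hx := le_ncard_neighborSet_cycleCliqueJoin_of_not_adj (by omega) hq hxy h
    have hy := le_ncard_neighborSet_cycleCliqueJoin_of_not_adj (by omega) hq hxy.symm
      (fun h' => h h'.symm)
    omega

theorem bipHoleNum_cycleCliqueJoin (hq : 2 * p ≤ q) :
    (cycleCliqueJoin p q r).bipHoleNum = 2 * p + 1 := by
  refine bipHoleNum_eq (s := p + 1) (t := p + 1) p.succ_pos p.succ_pos (by ring)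
    (not_hasBipHole_of_isClique_compl _ cycleCliqueJoin_isClique_compl_cycle (by simp) (by simp))
    fun s t hs ht hst => ?_
  have hole : (cycleCliqueJoin p q r).HasBipHole p q := by
    simpa [cycleCliqueJoin] using
      (hasBipHole_sum (G := cycleGraph p) (H := (⊤ : SimpleGraph (Fin q)))).graphJoin_left
        (H := (⊤ : SimpleGraph (Fin r)))
  rcases le_total s t with h | h
  · exact hole.mono (by omega) (by omega)
  · exact (hole.mono (s' := t) (t' := s) (by omega) (by omega)).symm

end CycleCliqueJoin

end SimpleGraph

open SimpleGraph in
/-- For positive integers `p ≥ 4`, `q ≥ 2p`, `2p - 1 ≤ r ≤ p + q - 5`,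
the graph `G = (C_p ∪ K_q) ∨ K_r` on `n = p + q + r` vertices satisfies `σ₂(G) = 2r + 4`,
`ᾱ(G) = 2p + 1`, and hence `n - 1 ≥ σ₂(G) ≥ 2ᾱ(G)`. -/
theorem stmt19 (p q r : ℕ) (hp : 4 ≤ p) (hq : 2 * p ≤ q)
    (hr : 2 * p - 1 ≤ r) (hr' : r ≤ p + q - 5)
    (G : SimpleGraph ((Fin p ⊕ Fin q) ⊕ Fin r))
    (hG : G = graphJoin
      ((SimpleGraph.cycleGraph p).sum (⊤ : SimpleGraph (Fin q)))
      (⊤ : SimpleGraph (Fin r))) :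
    G.sigmaTwo = 2 * r + 4 ∧
    G.bipHoleNum = 2 * p + 1 ∧
    G.sigmaTwo ≤ p + q + r - 1 ∧ 2 * G.bipHoleNum ≤ G.sigmaTwo := by
  obtain rfl : G = cycleCliqueJoin p q r := hG
  rw [sigmaTwo_cycleCliqueJoin hp (by omega), bipHoleNum_cycleCliqueJoin hq]
  omega
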